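/- Let (x, z, y) be a vertex solution (extreme point) of the polytope P = LP_RRMB(E_X, I_X, E_Y, I_Y, E_Z, L) such that x_e > 0 for every e ∈ E_X, y_e > 0 for every e ∈ E_Y, and z_e > 0 for every e ∈ E_Z, where E_X, E_Y, E_Z are all nonempty. Then there exists an element e' ∈ E_X with x_{e'} = 1, or an element e'' ∈ E_Y with y_{e''} = 1. -/

import Mathlib

open Finset

/-- A matroid `M = (E, I)` on a finite ground set, given by its finite ground set and
the family of independent sets. -/
structure FinMatroid (α : Type*) [DecidableEq α] where
  /-- the ground set -/
  E : Finset α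
  /-- the independence predicate -/
  Indep : Finset α → Prop
  indep_subset_ground : ∀ ⦃A⦄, Indep A → A ⊆ E
  indep_empty : Indep ∅
  indep_subset : ∀ ⦃A B⦄, A ⊆ B → Indep B → Indep A
  indep_exchange : ∀ ⦃A B⦄, Indep A → Indep B → A.card < B.card →
    ∃ e ∈ B \ A, Indep (insert e A)

open scoped Classical in
/-- The rank function of a matroid: `r_M(U) = max {|W| : W ⊆ U, W ∈ I}`. -/
noncomputable def FinMatroid.rank {α : Type*} [DecidableEq α]
    (M : FinMatroid α) (U : Finset α) : ℕ :=
  ((U.powerset.filter fun W => M.Indep W).image Finset.card).max'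
    ⟨0, Finset.mem_image.2 ⟨∅, Finset.mem_filter.2
      ⟨Finset.mem_powerset.2 (Finset.empty_subset U), M.indep_empty⟩,
      Finset.card_empty⟩⟩

/-- The feasible region of the linear program `LP_RRMB(E_X, I_X, E_Y, I_Y, E_Z, L)`,
viewed inside `ℝ^{E_X} × ℝ^{E_Z} × ℝ^{E_Y}` (coordinates outside the respective
ground sets are fixed to `0`). -/
noncomputable def LP_RRMB {α : Type*} [DecidableEq α]
    (MX MY : FinMatroid α) (EZ : Finset α) (L : ℕ) :
    Set ((α → ℝ) × (α → ℝ) × (α → ℝ)) :=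
  {q | (∀ e, 0 ≤ q.1 e) ∧ (∀ e, 0 ≤ q.2.1 e) ∧ (∀ e, 0 ≤ q.2.2 e) ∧
       (∀ e ∉ MX.E, q.1 e = 0) ∧ (∀ e ∉ EZ, q.2.1 e = 0) ∧ (∀ e ∉ MY.E, q.2.2 e = 0) ∧
       (∑ e ∈ MX.E, q.1 e = (MX.rank MX.E : ℝ)) ∧
       (∀ U : Finset α, U ⊂ MX.E → ∑ e ∈ U, q.1 e ≤ (MX.rank U : ℝ)) ∧
       (∀ e ∈ MX.E ∩ EZ, q.2.1 e ≤ q.1 e) ∧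
       (∑ e ∈ EZ, q.2.1 e = (L : ℝ)) ∧
       (∀ e ∈ MY.E ∩ EZ, q.2.1 e ≤ q.2.2 e) ∧
       (∑ e ∈ MY.E, q.2.2 e = (MY.rank MY.E : ℝ)) ∧
       (∀ U : Finset α, U ⊂ MY.E → ∑ e ∈ U, q.2.2 e ≤ (MY.rank U : ℝ))}

/-!
Suppose no coordinate equals `1`, so that `0 < x < 1` on `E_X` and `0 < y < 1` on `E_Y`.
By submodularity of the rank, the `x`-tight sets form a lattice, so they are unions of *atoms*
(classes of elements lying in the same tight sets), and each atom is the difference of two nested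
tight sets. Hence every atom has an integral `x`-sum, which is positive and smaller than its size:
there are at most `|E_X| / 2` atoms, and likewise for `y`.

A direction that keeps every tight constraint tight moves the vertex inside `P` both ways, so it
vanishes. Put `dz = dx` where `z = x` is tight, `dz = dy` where `z = y` is tight (on the set `N`
where both are, `dx = dy`), and let the remaining coordinates of `z` absorb the row `Σ z = L`.
What is left is a homogeneous system in `dx`, `dy`: one row per atom, one per element of `N`, and
the row `Σ z = L` if no coordinate of `z` is free. Counting shows it has a nonzero solution, except
in a few extremal configurations; there, either the rows are dependent, or the row `Σ z = L` pins
a single `x_e` or `y_e` to an integer.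
-/

open Filter Topology Module

noncomputable section

lemma one_le_of_eq_intCast {s : ℝ} {n : ℤ} (hs : s = n) (hpos : 0 < s) : 1 ≤ s := by
  subst hs
  exact_mod_cast Int.cast_pos.1 hpos

lemma Finset.sum_eq_sum_add_sum_sdiff_add_sum_sdiff_union {α β : Type*} [DecidableEq α]
    [AddCommMonoid β] {S A B : Finset α} (hA : A ⊆ S) (hB : B ⊆ S) (w : α → β) :
    ∑ e ∈ S, w e = ∑ e ∈ A, w e + ∑ e ∈ B \ A, w e + ∑ e ∈ S \ (A ∪ B), w e := by
  rw [← Finset.sum_union Finset.disjoint_sdiff, Finset.union_sdiff_self_eq_union,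
    ← Finset.sum_sdiff (Finset.union_subset hA hB), add_comm]

lemma Finset.card_sdiff_add_card_sdiff_eq_one_or {α : Type*} [DecidableEq α]
    {EX EY A B : Finset α} (hB : B ⊆ EY)
    (h : (EX \ (A ∩ B)).card + (EY \ (A ∩ B)).card ≤ 2) :
    (EX \ A).card + (B \ A).card = 1 ∨ (EX \ A = ∅ ∧ B \ A = ∅) ∨
      (EX \ A = EX \ (A ∩ B) ∧ B \ A = EY \ (A ∩ B)) := by
  have hP : EX \ A ⊆ EX \ (A ∩ B) := Finset.sdiff_subset_sdiff subset_rfl Finset.inter_subset_left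
  have hQ : B \ A ⊆ EY \ (A ∩ B) := fun e he => by
    simp only [Finset.mem_sdiff, Finset.mem_inter] at he ⊢
    exact ⟨hB he.1, fun h => he.2 h.1⟩
  have hcP := Finset.card_le_card hP
  have hcQ := Finset.card_le_card hQ
  rcases (by omega : (EX \ A).card + (B \ A).card = 1 ∨
      ((EX \ A).card = 0 ∧ (B \ A).card = 0) ∨
      ((EX \ (A ∩ B)).card ≤ (EX \ A).card ∧ (EY \ (A ∩ B)).card ≤ (B \ A).card))
    with h1 | ⟨h0P, h0Q⟩ | ⟨h2P, h2Q⟩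
  · exact Or.inl h1
  · exact Or.inr (Or.inl ⟨Finset.card_eq_zero.1 h0P, Finset.card_eq_zero.1 h0Q⟩)
  · exact Or.inr (Or.inr ⟨Finset.eq_of_subset_of_card_le hP h2P,
      Finset.eq_of_subset_of_card_le hQ h2Q⟩)

def Finset.extendByZero {α : Type*} (s : Finset α) : (s → ℝ) →ₗ[ℝ] α → ℝ :=
  Function.ExtendByZero.linearMap ℝ Subtype.val

lemma Finset.extendByZero_apply_of_notMem {α : Type*} {s : Finset α} (v : s → ℝ) {e : α}
    (he : e ∉ s) : extendByZero s v e = 0 := by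
  have hrange : ¬∃ a : s, (a : α) = e := by rintro ⟨a, rfl⟩; exact he a.2
  simp [extendByZero, Function.extend_apply' _ _ _ hrange]

lemma Finset.extendByZero_injective {α : Type*} (s : Finset α) :
    Function.Injective (extendByZero s) := fun _ _ h => funext fun i => by
  simpa [extendByZero, Subtype.val_injective.extend_apply] using congr_fun h i

lemma LinearMap.ker_ne_bot_of_finrank_le_of_comp_eq_zero {K V W : Type*} [Field K]
    [AddCommGroup V] [Module K V] [AddCommGroup W] [Module K W]
    [FiniteDimensional K V] [FiniteDimensional K W] {f : V →ₗ[K] W} {φ : W →ₗ[K] K}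
    (hφ : φ ≠ 0) (hφf : φ ∘ₗ f = 0) (h : finrank K W ≤ finrank K V) :
    LinearMap.ker f ≠ ⊥ := by
  have hrange : LinearMap.range f ≠ ⊤ := by
    refine fun htop => hφ (LinearMap.ext fun w => ?_)
    obtain ⟨v, rfl⟩ := LinearMap.range_eq_top.1 htop w
    exact LinearMap.congr_fun hφf v
  rw [← LinearMap.ker_rangeRestrict]
  exact LinearMap.ker_ne_bot_of_finrank_lt ((Submodule.finrank_lt hrange).trans_le h)

lemma eventually_add_mul_le_add_mul {a b c c' : ℝ} (h : a ≤ b) (hc : a = b → c = c') :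
    ∀ᶠ s in 𝓝 (0 : ℝ), a + s * c ≤ b + s * c' := by
  rcases h.lt_or_eq with hlt | rfl
  · have hcont : ∀ u v : ℝ, Tendsto (fun s => u + s * v) (𝓝 0) (𝓝 u) := fun u v => by
      simpa using (tendsto_const_nhds (x := u)).add ((tendsto_id (x := 𝓝 (0 : ℝ))).mul_const v)
    exact ((hcont a c).eventually_lt (hcont b c') hlt).mono fun _ => le_of_lt
  · simp [hc rfl]

lemma eq_zero_of_mem_extremePoints {E : Type*} [AddCommGroup E] [Module ℝ E] {S : Set E}
    {p d : E} (hp : p ∈ S.extremePoints ℝ) (h : ∀ᶠ s in 𝓝 (0 : ℝ), p + s • d ∈ S) : d = 0 := by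
  obtain ⟨ε, hε, hball⟩ := Metric.eventually_nhds_iff.1 h
  have hmem : ∀ s : ℝ, |s| < ε → p + s • d ∈ S := fun s hs => hball (by simpa using hs)
  have hplus := hmem (ε / 2) (by rw [abs_of_pos (by positivity)]; linarith)
  have hminus := hmem (-(ε / 2)) (by rw [abs_neg, abs_of_pos (by positivity)]; linarith)
  have hseg : p ∈ openSegment ℝ (p + (ε / 2) • d) (p + -(ε / 2) • d) :=
    ⟨1 / 2, 1 / 2, by norm_num, by norm_num, by norm_num, by module⟩
  have := hp.2 hplus hminus hseg
  rw [add_eq_left, smul_eq_zero] at this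
  exact this.resolve_left (by positivity)

lemma eventually_forall_nonneg {α : Type*} {S : Finset α} {w d : α → ℝ} (hw : ∀ e, 0 ≤ w e)
    (hS : ∀ e ∉ S, w e = 0) (hd : ∀ e, w e = 0 → d e = 0) :
    ∀ᶠ s in 𝓝 (0 : ℝ), ∀ e, 0 ≤ w e + s * d e := by
  have h := (Filter.eventually_all_finset S).2 fun e _ =>
    eventually_add_mul_le_add_mul (c := 0) (hw e) fun h => (hd e h.symm).symm
  filter_upwards [h] with s hs e
  by_cases he : e ∈ S
  · simpa using hs e he
  · simp [hS e he, hd e (hS e he)]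

namespace FinMatroid

variable {α : Type*} [DecidableEq α]

section Rank

variable (M : FinMatroid α)

def toMatroid : Matroid α :=
  (IndepMatroid.ofFinset (M.E : Set α) M.Indep M.indep_empty
    (fun _ _ hJ hIJ => M.indep_subset hIJ hJ)
    (fun _ _ hI hJ hlt => by
      obtain ⟨e, he, hins⟩ := M.indep_exchange hI hJ hlt
      exact ⟨e, (Finset.mem_sdiff.1 he).1, (Finset.mem_sdiff.1 he).2, hins⟩)
    (fun _ hI => Finset.coe_subset.2 (M.indep_subset_ground hI))).matroid

@[simp] lemma toMatroid_indep_coe {I : Finset α} : M.toMatroid.Indep I ↔ M.Indep I := by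
  simp [toMatroid]

lemma card_le_rank {I U : Finset α} (hIU : I ⊆ U) (hI : M.Indep I) : I.card ≤ M.rank U := by
  classical
  exact Finset.le_max' _ _
    (Finset.mem_image.2 ⟨I, Finset.mem_filter.2 ⟨Finset.mem_powerset.2 hIU, hI⟩, rfl⟩)

lemma exists_indep_card_eq_rank (U : Finset α) : ∃ I ⊆ U, M.Indep I ∧ I.card = M.rank U := by
  classical
  obtain ⟨I, hI, hcard⟩ := Finset.mem_image.1 (Finset.max'_mem _ _ : M.rank U ∈ _)
  rw [Finset.mem_filter, Finset.mem_powerset] at hI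
  exact ⟨I, hI.1, hI.2, hcard⟩

lemma rank_le_card (U : Finset α) : M.rank U ≤ U.card := by
  obtain ⟨I, hIU, -, hI⟩ := M.exists_indep_card_eq_rank U
  exact hI ▸ Finset.card_le_card hIU

@[simp] lemma rank_empty : M.rank ∅ = 0 := by
  simpa using M.rank_le_card ∅

lemma eRk_toMatroid (U : Finset α) : M.toMatroid.eRk U = M.rank U := by
  refine le_antisymm (Matroid.eRk_le_iff.2 fun I hIU hI => ?_) (Matroid.le_eRk_iff.2 ?_)
  · lift I to Finset α using (U.finite_toSet.subset hIU)
    rw [Set.encard_coe_eq_coe_finsetCard, Nat.cast_le]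
    exact M.card_le_rank (Finset.coe_subset.1 hIU) ((M.toMatroid_indep_coe).1 hI)
  · obtain ⟨I, hIU, hI, hcard⟩ := M.exists_indep_card_eq_rank U
    exact ⟨I, Finset.coe_subset.2 hIU, (M.toMatroid_indep_coe).2 hI, by simp [hcard]⟩

lemma rank_inter_add_rank_union_le (U V : Finset α) :
    M.rank (U ∩ V) + M.rank (U ∪ V) ≤ M.rank U + M.rank V := by
  have h := M.toMatroid.eRk_inter_add_eRk_union_le U V
  rw [← Finset.coe_inter, ← Finset.coe_union] at h
  simp only [eRk_toMatroid] at h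
  exact_mod_cast h

end Rank

section Atoms

variable {M : FinMatroid α} {x : α → ℝ}

def IsTight (M : FinMatroid α) (x : α → ℝ) (U : Finset α) : Prop :=
  U ⊆ M.E ∧ ∑ e ∈ U, x e = M.rank U

lemma isTight_empty : M.IsTight x ∅ := ⟨Finset.empty_subset _, by simp⟩

lemma isTight_inter_and_union (hx : ∀ U ⊆ M.E, ∑ e ∈ U, x e ≤ M.rank U) {U V : Finset α}
    (hU : M.IsTight x U) (hV : M.IsTight x V) :
    M.IsTight x (U ∩ V) ∧ M.IsTight x (U ∪ V) := by
  have hsub : (M.rank (U ∩ V) : ℝ) + M.rank (U ∪ V) ≤ M.rank U + M.rank V := by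
    exact_mod_cast M.rank_inter_add_rank_union_le U V
  have hIE : U ∩ V ⊆ M.E := fun e he => hU.1 (Finset.mem_inter.1 he).1
  have hinter := hx _ hIE
  have hunion := hx _ (Finset.union_subset hU.1 hV.1)
  have hsum : ∑ e ∈ U ∪ V, x e + ∑ e ∈ U ∩ V, x e = ∑ e ∈ U, x e + ∑ e ∈ V, x e :=
    Finset.sum_union_inter
  exact ⟨⟨hIE, by linarith [hU.2, hV.2]⟩,
    ⟨Finset.union_subset hU.1 hV.1, by linarith [hU.2, hV.2]⟩⟩

open scoped Classical in
def tightSets (M : FinMatroid α) (x : α → ℝ) : Finset (Finset α) :=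
  M.E.powerset.filter (M.IsTight x)

lemma mem_tightSets {U : Finset α} : U ∈ M.tightSets x ↔ M.IsTight x U := by
  simp only [tightSets, Finset.mem_filter, Finset.mem_powerset, and_iff_right_iff_imp]
  exact And.left

/-- Elements with the same tight profile form an *atom* of `x`; every tight set is a union of
atoms. -/
def tightProfile (M : FinMatroid α) (x : α → ℝ) (e : α) : Finset (Finset α) :=
  (M.tightSets x).filter (e ∈ ·)

lemma mem_tightProfile {e : α} {U : Finset α} :
    U ∈ M.tightProfile x e ↔ M.IsTight x U ∧ e ∈ U := by
  simp [tightProfile, mem_tightSets]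

def tightProfiles (M : FinMatroid α) (x : α → ℝ) : Finset (Finset (Finset α)) :=
  M.E.image (M.tightProfile x)

def atom (M : FinMatroid α) (x : α → ℝ) (k : Finset (Finset α)) : Finset α :=
  M.E.filter (M.tightProfile x · = k)

lemma tightProfile_eq_iff {e f : α} :
    M.tightProfile x f = M.tightProfile x e ↔ ∀ U, M.IsTight x U → (f ∈ U ↔ e ∈ U) := by
  simp only [tightProfile, Finset.ext_iff, Finset.mem_filter, mem_tightSets]
  exact forall_congr' fun U => by tauto

lemma atom_subset_of_isTight {U : Finset α} (hU : M.IsTight x U) {e : α} (he : e ∈ U) :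
    M.atom x (M.tightProfile x e) ⊆ U := fun _ hf =>
  (tightProfile_eq_iff.1 (Finset.mem_filter.1 hf).2 U hU).2 he

lemma sum_tightProfiles_sum_atom (g : α → ℝ) :
    ∑ k ∈ M.tightProfiles x, ∑ e ∈ M.atom x k, g e = ∑ e ∈ M.E, g e :=
  Finset.sum_fiberwise_of_maps_to (g := M.tightProfile x) (fun _ => Finset.mem_image_of_mem _) g

lemma sum_eq_zero_of_isTight {d : α → ℝ}
    (hd : ∀ k ∈ M.tightProfiles x, ∑ e ∈ M.atom x k, d e = 0)
    {U : Finset α} (hU : M.IsTight x U) : ∑ e ∈ U, d e = 0 := by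
  rw [← Finset.sum_fiberwise_of_maps_to (g := M.tightProfile x)
    (fun _ => Finset.mem_image_of_mem _) d]
  refine Finset.sum_eq_zero fun k hk => ?_
  obtain ⟨e, he, rfl⟩ := Finset.mem_image.1 hk
  rw [← hd _ (Finset.mem_image_of_mem _ (hU.1 he))]
  congr 1
  ext f
  simp only [atom, Finset.mem_filter]
  exact ⟨fun h => ⟨hU.1 h.1, h.2⟩, fun h => ⟨atom_subset_of_isTight hU he
    (Finset.mem_filter.2 h), h.2⟩⟩

/-- The atom of `e` is `C \ D`, where `C` is the smallest tight set containing `e` and `D` the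
largest tight set avoiding it. -/
lemma exists_sum_atom_eq_intCast (hx : ∀ U ⊆ M.E, ∑ e ∈ U, x e ≤ M.rank U)
    (hE : ∑ e ∈ M.E, x e = M.rank M.E) {e : α} (he : e ∈ M.E) :
    ∃ n : ℤ, ∑ f ∈ M.atom x (M.tightProfile x e), x f = n := by
  have hne : (M.tightProfile x e).Nonempty :=
    ⟨M.E, mem_tightProfile.2 ⟨⟨subset_rfl, hE⟩, he⟩⟩
  set C := (M.tightProfile x e).inf' hne id
  set D := ((M.tightSets x).filter (e ∉ ·)).sup id
  have hC : M.IsTight x C := by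
    refine InfClosed.finsetInf'_mem (s := {U | M.IsTight x U})
      (fun U hU V hV => (isTight_inter_and_union hx hU hV).1) hne
      fun U hU => (mem_tightProfile.1 hU).1
  have hD : M.IsTight x D := Finset.sup_induction isTight_empty
    (fun U hU V hV => (isTight_inter_and_union hx hU hV).2)
    fun U hU => mem_tightSets.1 (Finset.mem_filter.1 hU).1
  have hCD : M.IsTight x (C ∩ D) := (isTight_inter_and_union hx hC hD).1
  have hmemC : ∀ f, f ∈ C ↔ ∀ U, M.IsTight x U → e ∈ U → f ∈ U := fun f => by
    simp [C, mem_tightProfile]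
  have hmemD : ∀ f, f ∈ D ↔ ∃ U, M.IsTight x U ∧ e ∉ U ∧ f ∈ U := fun f => by
    simp [D, mem_tightSets, and_assoc]
  have hatom : M.atom x (M.tightProfile x e) = C \ (C ∩ D) := by
    ext f
    simp only [atom, Finset.mem_filter, tightProfile_eq_iff, Finset.sdiff_inter_self_left,
      Finset.mem_sdiff, hmemC, hmemD]
    constructor
    · rintro ⟨-, hf⟩
      exact ⟨fun U hU heU => (hf U hU).2 heU, fun ⟨U, hU, heU, hfU⟩ => heU ((hf U hU).1 hfU)⟩
    · rintro ⟨hfC, hfD⟩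
      exact ⟨hC.1 ((hmemC f).2 hfC), fun U hU =>
        ⟨fun hfU => by_contra fun heU => hfD ⟨U, hU, heU, hfU⟩, hfC U hU⟩⟩
  refine ⟨M.rank C - M.rank (C ∩ D), ?_⟩
  rw [hatom, Finset.sum_sdiff_eq_sub Finset.inter_subset_left, hC.2, hCD.2]
  push_cast
  ring

structure IsFractionalBase (M : FinMatroid α) (x : α → ℝ) : Prop where
  sum_le : ∀ U ⊆ M.E, ∑ e ∈ U, x e ≤ M.rank U
  sum_ground : ∑ e ∈ M.E, x e = M.rank M.E
  pos : ∀ e ∈ M.E, 0 < x e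
  lt_one : ∀ e ∈ M.E, x e < 1

lemma two_le_card_atom (hx : M.IsFractionalBase x) {e : α} (he : e ∈ M.E) :
    2 ≤ (M.atom x (M.tightProfile x e)).card := by
  have hmem : e ∈ M.atom x (M.tightProfile x e) := Finset.mem_filter.2 ⟨he, rfl⟩
  have hsubE : M.atom x (M.tightProfile x e) ⊆ M.E := Finset.filter_subset _ _
  obtain ⟨n, hn⟩ := exists_sum_atom_eq_intCast hx.sum_le hx.sum_ground he
  have hone := one_le_of_eq_intCast hn
    (Finset.sum_pos (fun f hf => hx.pos f (hsubE hf)) ⟨e, hmem⟩)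
  have hlt : ∑ f ∈ M.atom x (M.tightProfile x e), x f < (M.atom x (M.tightProfile x e)).card := by
    simpa using Finset.sum_lt_sum_of_nonempty ⟨e, hmem⟩ fun f hf => hx.lt_one f (hsubE hf)
  exact_mod_cast hone.trans_lt hlt

lemma two_mul_card_tightProfiles_le (hx : M.IsFractionalBase x) :
    2 * (M.tightProfiles x).card ≤ M.E.card := by
  rw [Finset.card_eq_sum_card_image (M.tightProfile x) M.E, mul_comm, ← smul_eq_mul]
  refine Finset.card_nsmul_le_sum _ _ _ fun k hk => ?_
  obtain ⟨e, he, rfl⟩ := Finset.mem_image.1 hk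
  exact two_le_card_atom hx he

lemma isFractionalBase_of (hground : ∑ e ∈ M.E, x e = M.rank M.E)
    (hle : ∀ U ⊂ M.E, ∑ e ∈ U, x e ≤ M.rank U) (hpos : ∀ e ∈ M.E, 0 < x e)
    (hne : ∀ e ∈ M.E, x e ≠ 1) : M.IsFractionalBase x where
  sum_le U hU := hU.ssubset_or_eq.elim (hle U) fun h => h ▸ hground.le
  sum_ground := hground
  pos := hpos
  lt_one e he := by
    refine lt_of_le_of_ne ?_ (hne e he)
    have hsingle : ∑ f ∈ {e}, x f ≤ M.rank {e} :=
      (Finset.singleton_subset_iff.2 he).ssubset_or_eq.elim (hle _)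
        fun h => h ▸ hground.le
    have hrank : (M.rank {e} : ℝ) ≤ 1 := by exact_mod_cast M.rank_le_card {e}
    simpa using hsingle.trans hrank

end Atoms

lemma eventually_rank_constraints {M : FinMatroid α} {w d : α → ℝ}
    (hground : ∑ e ∈ M.E, w e = M.rank M.E) (hle : ∀ U ⊂ M.E, ∑ e ∈ U, w e ≤ M.rank U)
    (hd : ∀ U, M.IsTight w U → ∑ e ∈ U, d e = 0) :
    ∀ᶠ s in 𝓝 (0 : ℝ), ∑ e ∈ M.E, (w e + s * d e) = M.rank M.E ∧
      ∀ U ⊂ M.E, ∑ e ∈ U, (w e + s * d e) ≤ M.rank U := by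
  have h := (Filter.eventually_all_finset M.E.ssubsets).2 fun U hU =>
    eventually_add_mul_le_add_mul (c' := 0) (hle U (Finset.mem_ssubsets.1 hU))
      fun h => hd U ⟨(Finset.mem_ssubsets.1 hU).subset, h⟩
  filter_upwards [h] with s hs
  simp only [Finset.sum_add_distrib, ← Finset.mul_sum, hd _ ⟨subset_rfl, hground⟩, hground,
    mul_zero, add_zero, true_and]
  exact fun U hU => by simpa using hs U (Finset.mem_ssubsets.2 hU)

section Coupled

def PreservesTightSets (M : FinMatroid α) (x d : α → ℝ) : Prop :=
  (∀ e ∉ M.E, d e = 0) ∧ ∀ U, M.IsTight x U → ∑ e ∈ U, d e = 0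

variable (MX MY : FinMatroid α) (x y : α → ℝ) (N : Finset α)

def couplingMap : (α → ℝ) × (α → ℝ) →ₗ[ℝ]
    (MX.tightProfiles x → ℝ) × (MY.tightProfiles y → ℝ) × (N → ℝ) where
  toFun d := (fun k => ∑ e ∈ MX.atom x k, d.1 e, fun k => ∑ e ∈ MY.atom y k, d.2 e,
    fun e => d.1 e - d.2 e)
  map_add' d d' := by
    ext <;> simp [Finset.sum_add_distrib]; ring
  map_smul' c d := by
    ext <;> simp [Finset.mul_sum]; ring

def pairExtendByZero : ((MX.E → ℝ) × (MY.E → ℝ)) →ₗ[ℝ] (α → ℝ) × (α → ℝ) :=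
  MX.E.extendByZero.prodMap MY.E.extendByZero

def IsCoupledDirection (d : (α → ℝ) × (α → ℝ)) : Prop :=
  MX.PreservesTightSets x d.1 ∧ MY.PreservesTightSets y d.2 ∧ ∀ e ∈ N, d.1 e = d.2 e

variable {MX MY x y N}

lemma finrank_domain_pairExtendByZero :
    finrank ℝ ((MX.E → ℝ) × (MY.E → ℝ)) = MX.E.card + MY.E.card := by
  simp

lemma finrank_codomain_couplingMap :
    finrank ℝ ((MX.tightProfiles x → ℝ) × (MY.tightProfiles y → ℝ) × (N → ℝ)) =
      (MX.tightProfiles x).card + (MY.tightProfiles y).card + N.card := by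
  simp [add_assoc]

lemma pairExtendByZero_ne_zero {v : (MX.E → ℝ) × (MY.E → ℝ)} (hv : v ≠ 0) :
    pairExtendByZero MX MY v ≠ 0 := fun h0 =>
  hv ((LinearMap.map_eq_zero_iff _
    ((Finset.extendByZero_injective _).prodMap (Finset.extendByZero_injective _))).1 h0)

lemma isCoupledDirection_pairExtendByZero {v : (MX.E → ℝ) × (MY.E → ℝ)}
    (hv : couplingMap MX MY x y N (pairExtendByZero MX MY v) = 0) :
    IsCoupledDirection MX MY x y N (pairExtendByZero MX MY v) := by
  simp only [couplingMap, LinearMap.coe_mk, AddHom.coe_mk, Prod.mk_eq_zero, funext_iff,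
    Pi.zero_apply, Subtype.forall] at hv
  obtain ⟨hvX, hvY, hvN⟩ := hv
  exact ⟨⟨fun _ he => Finset.extendByZero_apply_of_notMem _ he,
      fun U hU => sum_eq_zero_of_isTight hvX hU⟩,
    ⟨fun _ he => Finset.extendByZero_apply_of_notMem _ he,
      fun U hU => sum_eq_zero_of_isTight hvY hU⟩,
    fun e he => sub_eq_zero.1 (hvN e he)⟩

lemma exists_isCoupledDirection (hx : MX.IsFractionalBase x) (hy : MY.IsFractionalBase y)
    (hNX : N ⊆ MX.E) (hNY : N ⊆ MY.E) (hne : MX.E.Nonempty) :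
    ∃ d, IsCoupledDirection MX MY x y N d ∧ d ≠ 0 := by
  suffices LinearMap.ker (couplingMap MX MY x y N ∘ₗ pairExtendByZero MX MY) ≠ ⊥ by
    obtain ⟨v, hv, hv0⟩ := Submodule.exists_mem_ne_zero_of_ne_bot this
    exact ⟨_, isCoupledDirection_pairExtendByZero hv, pairExtendByZero_ne_zero hv0⟩
  have hcX := two_mul_card_tightProfiles_le hx
  have hcY := two_mul_card_tightProfiles_le hy
  have hNX' := Finset.card_le_card hNX
  have hNY' := Finset.card_le_card hNY
  by_cases hlt : (MX.tightProfiles x).card + (MY.tightProfiles y).card + N.card <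
      MX.E.card + MY.E.card
  · refine LinearMap.ker_ne_bot_of_finrank_lt ?_
    rwa [finrank_codomain_couplingMap, finrank_domain_pairExtendByZero]
  -- Otherwise `N = MX.E = MY.E`: the atom rows of `x` add up to `Σ dx`, those of `y` to `Σ dy`,
  -- and the rows of `N` to `Σ dx - Σ dy`, a linear dependency.
  have hEX : N = MX.E := Finset.eq_of_subset_of_card_le hNX (by omega)
  have hEY : N = MY.E := Finset.eq_of_subset_of_card_le hNY (by omega)
  obtain ⟨k₀, hk₀⟩ : (MX.tightProfiles x).Nonempty := hne.image _
  let φ : ((MX.tightProfiles x → ℝ) × (MY.tightProfiles y → ℝ) × (N → ℝ)) →ₗ[ℝ] ℝ :=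
    (∑ k, LinearMap.proj k) ∘ₗ LinearMap.fst ℝ _ _ -
    (∑ k, LinearMap.proj k) ∘ₗ LinearMap.fst ℝ _ _ ∘ₗ LinearMap.snd ℝ _ _ -
    (∑ e, LinearMap.proj e) ∘ₗ LinearMap.snd ℝ _ _ ∘ₗ LinearMap.snd ℝ _ _
  refine LinearMap.ker_ne_bot_of_finrank_le_of_comp_eq_zero (φ := φ) ?_ ?_ ?_
  · intro hφ
    have := LinearMap.congr_fun hφ (Pi.single ⟨k₀, hk₀⟩ 1, 0, 0)
    simp [φ] at this
  · suffices ∀ d, φ (couplingMap MX MY x y N d) = 0 from LinearMap.ext fun v => this _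
    intro d
    simp only [φ, couplingMap, LinearMap.sub_apply, LinearMap.comp_apply, LinearMap.sum_apply,
      LinearMap.coe_proj, Function.eval, LinearMap.fst_apply, LinearMap.snd_apply,
      LinearMap.coe_mk, AddHom.coe_mk]
    rw [Finset.sum_coe_sort _ (fun k => ∑ e ∈ MX.atom x k, d.1 e),
      Finset.sum_coe_sort _ (fun k => ∑ e ∈ MY.atom y k, d.2 e),
      Finset.sum_coe_sort N (fun e => d.1 e - d.2 e), Finset.sum_sub_distrib,
      sum_tightProfiles_sum_atom, sum_tightProfiles_sum_atom]
    nth_rw 1 [hEX]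
    rw [hEY]
    ring
  · rw [finrank_codomain_couplingMap, finrank_domain_pairExtendByZero]
    omega

lemma exists_isCoupledDirection_and_eq_zero (σ : (α → ℝ) × (α → ℝ) →ₗ[ℝ] ℝ)
    (hx : MX.IsFractionalBase x) (hy : MY.IsFractionalBase y)
    (hcard : 2 * N.card + 3 ≤ MX.E.card + MY.E.card) :
    ∃ d, IsCoupledDirection MX MY x y N d ∧ σ d = 0 ∧ d ≠ 0 := by
  have hcX := two_mul_card_tightProfiles_le hx
  have hcY := two_mul_card_tightProfiles_le hy
  have hker : LinearMap.ker ((couplingMap MX MY x y N).prod σ ∘ₗ pairExtendByZero MX MY) ≠ ⊥ := by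
    refine LinearMap.ker_ne_bot_of_finrank_lt ?_
    rw [Module.finrank_prod, finrank_codomain_couplingMap, finrank_domain_pairExtendByZero,
      Module.finrank_self]
    omega
  obtain ⟨v, hv, hv0⟩ := Submodule.exists_mem_ne_zero_of_ne_bot hker
  rw [LinearMap.mem_ker, LinearMap.comp_apply, LinearMap.prod_apply, Prod.mk_eq_zero] at hv
  exact ⟨_, isCoupledDirection_pairExtendByZero hv.1, hv.2, pairExtendByZero_ne_zero hv0⟩

/-- If the sets differed in one element, that coordinate of `x` or `y` would be an integer. -/
lemma card_sdiff_add_card_sdiff_ne_one (hx : MX.IsFractionalBase x) (hy : MY.IsFractionalBase y)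
    {A B : Finset α} (hA : A ⊆ MX.E) (hB : B ⊆ MY.E) {n : ℤ}
    (hn : ∑ e ∈ A, x e + ∑ e ∈ B \ A, y e = n) : (MX.E \ A).card + (B \ A).card ≠ 1 := by
  intro h1
  have hsdiff := Finset.sum_sdiff_eq_sub hA (f := x)
  rw [hx.sum_ground] at hsdiff
  rcases (by omega : (MX.E \ A).card = 1 ∧ (B \ A).card = 0 ∨
      (MX.E \ A).card = 0 ∧ (B \ A).card = 1) with ⟨hP, hQ⟩ | ⟨hP, hQ⟩
  · obtain ⟨e, he⟩ := Finset.card_eq_one.1 hP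
    have heE : e ∈ MX.E := (Finset.mem_sdiff.1 (he ▸ Finset.mem_singleton_self e)).1
    rw [he, Finset.sum_singleton] at hsdiff
    rw [Finset.card_eq_zero.1 hQ, Finset.sum_empty] at hn
    have hxe : x e = ((MX.rank MX.E - n : ℤ) : ℝ) := by push_cast; linarith
    exact (hx.lt_one e heE).not_ge (one_le_of_eq_intCast hxe (hx.pos e heE))
  · obtain ⟨e, he⟩ := Finset.card_eq_one.1 hQ
    have heE : e ∈ MY.E := hB (Finset.mem_sdiff.1 (he ▸ Finset.mem_singleton_self e)).1
    rw [Finset.card_eq_zero.1 hP, Finset.sum_empty] at hsdiff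
    rw [he, Finset.sum_singleton] at hn
    have hye : y e = ((n - MX.rank MX.E : ℤ) : ℝ) := by push_cast; linarith
    exact (hy.lt_one e heE).not_ge (one_le_of_eq_intCast hye (hy.pos e heE))

lemma exists_isCoupledDirection_sum_eq_zero (hx : MX.IsFractionalBase x)
    (hy : MY.IsFractionalBase y) (hne : MX.E.Nonempty) {A B : Finset α} (hA : A ⊆ MX.E)
    (hB : B ⊆ MY.E) {n : ℤ} (hn : ∑ e ∈ A, x e + ∑ e ∈ B \ A, y e = n) :
    ∃ d, IsCoupledDirection MX MY x y (A ∩ B) d ∧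
      ∑ e ∈ A, d.1 e + ∑ e ∈ B \ A, d.2 e = 0 ∧ d ≠ 0 := by
  have hNX : A ∩ B ⊆ MX.E := Finset.inter_subset_left.trans hA
  have hNY : A ∩ B ⊆ MY.E := Finset.inter_subset_right.trans hB
  by_cases hcard : 2 * (A ∩ B).card + 3 ≤ MX.E.card + MY.E.card
  · let σ : (α → ℝ) × (α → ℝ) →ₗ[ℝ] ℝ := (∑ e ∈ A, LinearMap.proj e) ∘ₗ LinearMap.fst ℝ _ _ +
      (∑ e ∈ B \ A, LinearMap.proj e) ∘ₗ LinearMap.snd ℝ _ _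
    obtain ⟨d, hd, hσ, hd0⟩ := exists_isCoupledDirection_and_eq_zero σ hx hy hcard
    exact ⟨d, hd, by simpa [σ, LinearMap.sum_apply] using hσ, hd0⟩
  -- Counting leaves room for the extra row unless `N = A ∩ B` misses at most two elements of
  -- `MX.E` and `MY.E`; then the row is a ground row, or it pins a single coordinate to an integer.
  have hsmall : (MX.E \ (A ∩ B)).card + (MY.E \ (A ∩ B)).card ≤ 2 := by
    rw [Finset.card_sdiff_of_subset hNX, Finset.card_sdiff_of_subset hNY]
    have := Finset.card_le_card hNX
    have := Finset.card_le_card hNY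
    omega
  obtain ⟨d, hd, hd0⟩ := exists_isCoupledDirection hx hy hNX hNY hne
  have hdX := hd.1.2 _ ⟨subset_rfl, hx.sum_ground⟩
  have hdY := hd.2.1.2 _ ⟨subset_rfl, hy.sum_ground⟩
  refine ⟨d, hd, ?_, hd0⟩
  have hsdiff := Finset.sum_sdiff_eq_sub hA (f := d.1)
  rcases Finset.card_sdiff_add_card_sdiff_eq_one_or hB hsmall with h1 | ⟨hP, hQ⟩ | ⟨hP, hQ⟩
  · exact absurd h1 (card_sdiff_add_card_sdiff_ne_one hx hy hA hB hn)
  · rw [hP, Finset.sum_empty] at hsdiff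
    rw [hQ, Finset.sum_empty]
    linarith
  · have hM : ∑ e ∈ A ∩ B, d.1 e = ∑ e ∈ A ∩ B, d.2 e := Finset.sum_congr rfl hd.2.2
    rw [hP, Finset.sum_sdiff_eq_sub hNX] at hsdiff
    rw [hQ, Finset.sum_sdiff_eq_sub hNY]
    linarith

end Coupled

end FinMatroid

namespace LP_RRMB

variable {α : Type*} [DecidableEq α]

open FinMatroid

lemma eventually_add_smul_mem {MX MY : FinMatroid α} {EZ : Finset α} {L : ℕ}
    {x z y dx dz dy : α → ℝ} (hp : (x, z, y) ∈ LP_RRMB MX MY EZ L)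
    (hdx : ∀ e, x e = 0 → dx e = 0) (hdz : ∀ e, z e = 0 → dz e = 0)
    (hdy : ∀ e, y e = 0 → dy e = 0)
    (hX : ∀ U, MX.IsTight x U → ∑ e ∈ U, dx e = 0)
    (hXZ : ∀ e ∈ MX.E ∩ EZ, z e = x e → dz e = dx e) (hZ : ∑ e ∈ EZ, dz e = 0)
    (hYZ : ∀ e ∈ MY.E ∩ EZ, z e = y e → dz e = dy e)
    (hY : ∀ U, MY.IsTight y U → ∑ e ∈ U, dy e = 0) :
    ∀ᶠ s in 𝓝 (0 : ℝ), (x, z, y) + s • (dx, dz, dy) ∈ LP_RRMB MX MY EZ L := by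
  obtain ⟨h1, h2, h3, h4, h5, h6, h7, h8, h9, h10, h11, h12, h13⟩ := hp
  dsimp only at *
  have hXZ' := (Filter.eventually_all_finset (MX.E ∩ EZ)).2 fun e he =>
    eventually_add_mul_le_add_mul (h9 e he) (hXZ e he)
  have hYZ' := (Filter.eventually_all_finset (MY.E ∩ EZ)).2 fun e he =>
    eventually_add_mul_le_add_mul (h11 e he) (hYZ e he)
  filter_upwards [eventually_forall_nonneg h1 h4 hdx, eventually_forall_nonneg h2 h5 hdz,
    eventually_forall_nonneg h3 h6 hdy, eventually_rank_constraints h7 h8 hX, hXZ', hYZ',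
    eventually_rank_constraints h12 h13 hY] with s nX nZ nY ⟨gX, rX⟩ cXZ cYZ ⟨gY, rY⟩
  refine ⟨nX, nZ, nY, fun e he => ?_, fun e he => ?_, fun e he => ?_, gX, rX, cXZ, ?_, cYZ,
    gY, rY⟩
  · simp [h4 e he, hdx e (h4 e he)]
  · simp [h5 e he, hdz e (h5 e he)]
  · simp [h6 e he, hdy e (h6 e he)]
  · simp [Finset.sum_add_distrib, ← Finset.mul_sum, hZ, h10]

lemma eq_zero_of_isCoupledDirection {MX MY : FinMatroid α} {EZ : Finset α} {L : ℕ}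
    {x z y : α → ℝ} (hvert : (x, z, y) ∈ Set.extremePoints ℝ (LP_RRMB MX MY EZ L))
    (hx : ∀ e ∈ MX.E, 0 < x e) (hy : ∀ e ∈ MY.E, 0 < y e) (hz : ∀ e ∈ EZ, 0 < z e)
    {A B : Finset α} (hAZ : A ⊆ EZ) (hBZ : B ⊆ EZ)
    (hA : ∀ e ∈ MX.E ∩ EZ, z e = x e → e ∈ A) (hB : ∀ e ∈ MY.E ∩ EZ, z e = y e → e ∈ B)
    {d : (α → ℝ) × (α → ℝ)} (hd : IsCoupledDirection MX MY x y (A ∩ B) d)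
    (hσ : EZ \ (A ∪ B) = ∅ → ∑ e ∈ A, d.1 e + ∑ e ∈ B \ A, d.2 e = 0) : d = 0 := by
  obtain ⟨⟨hdX0, hdX⟩, ⟨hdY0, hdY⟩, hdN⟩ := hd
  -- The free coordinates of `z`, if any, absorb the coupling row.
  obtain ⟨dF, hdF0, hdF⟩ : ∃ dF : α → ℝ, (∀ e ∉ EZ \ (A ∪ B), dF e = 0) ∧
      ∑ e ∈ A, d.1 e + ∑ e ∈ B \ A, d.2 e + ∑ e ∈ EZ \ (A ∪ B), dF e = 0 := by
    rcases (EZ \ (A ∪ B)).eq_empty_or_nonempty with hF | ⟨f, hf⟩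
    · exact ⟨0, fun _ _ => rfl, by simp [hF, hσ hF]⟩
    · refine ⟨Pi.single f (-(∑ e ∈ A, d.1 e + ∑ e ∈ B \ A, d.2 e)),
        fun e he => Pi.single_eq_of_ne (ne_of_mem_of_not_mem hf he).symm _, ?_⟩
      rw [Finset.sum_pi_single' f _ _, if_pos hf]
      ring
  set dz := A.piecewise d.1 (B.piecewise d.2 dF)
  have hdzA : ∀ e ∈ A, dz e = d.1 e := fun e he => Finset.piecewise_eq_of_mem _ _ _ he
  have hdzB : ∀ e ∈ B \ A, dz e = d.2 e := fun e he => by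
    rw [Finset.mem_sdiff] at he
    simp [dz, he.1, he.2]
  have hdzF : ∀ e ∉ A ∪ B, dz e = dF e := fun e he => by
    rw [Finset.mem_union, not_or] at he
    simp [dz, he.1, he.2]
  have hmove : (d.1, dz, d.2) = 0 := by
    refine eq_zero_of_mem_extremePoints hvert (eventually_add_smul_mem hvert.1
      (fun e he => hdX0 e fun hE => (hx e hE).ne' he) (fun e he => ?_)
      (fun e he => hdY0 e fun hE => (hy e hE).ne' he) hdX
      (fun e he h => hdzA e (hA e he h)) ?_ (fun e he h => ?_) hdY)
    · have heZ : e ∉ EZ := fun hE => (hz e hE).ne' he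
      rw [hdzF e fun h => heZ (Finset.union_subset hAZ hBZ h)]
      exact hdF0 e fun h => heZ (Finset.mem_sdiff.1 h).1
    · rw [Finset.sum_eq_sum_add_sum_sdiff_add_sum_sdiff_union hAZ hBZ, Finset.sum_congr rfl hdzA,
        Finset.sum_congr rfl hdzB,
        Finset.sum_congr rfl fun e he => hdzF e (Finset.mem_sdiff.1 he).2]
      exact hdF
    · by_cases heA : e ∈ A
      · rw [hdzA e heA, hdN e (Finset.mem_inter.2 ⟨heA, hB e he h⟩)]
      · exact hdzB e (Finset.mem_sdiff.2 ⟨hB e he h, heA⟩)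
  simp only [Prod.mk_eq_zero] at hmove
  exact Prod.ext hmove.1 hmove.2.2

section TightCouplings

def tightCouplings (E EZ : Finset α) (x z : α → ℝ) : Finset α :=
  (E ∩ EZ).filter fun e => z e = x e

variable {E EZ : Finset α} {x z : α → ℝ}

lemma mem_tightCouplings {e : α} : e ∈ tightCouplings E EZ x z ↔ e ∈ E ∩ EZ ∧ z e = x e :=
  Finset.mem_filter

lemma tightCouplings_subset_left : tightCouplings E EZ x z ⊆ E := fun _ he =>
  (Finset.mem_inter.1 (mem_tightCouplings.1 he).1).1

lemma tightCouplings_subset_right : tightCouplings E EZ x z ⊆ EZ := fun _ he =>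
  (Finset.mem_inter.1 (mem_tightCouplings.1 he).1).2

lemma exists_isCoupledDirection_tightCouplings {MX MY : FinMatroid α} {L : ℕ} {y : α → ℝ}
    (hx : MX.IsFractionalBase x) (hy : MY.IsFractionalBase y) (hne : MX.E.Nonempty)
    (hZ : ∑ e ∈ EZ, z e = L) :
    ∃ d, IsCoupledDirection MX MY x y
      (tightCouplings MX.E EZ x z ∩ tightCouplings MY.E EZ y z) d ∧
      (EZ \ (tightCouplings MX.E EZ x z ∪ tightCouplings MY.E EZ y z) = ∅ →
        ∑ e ∈ tightCouplings MX.E EZ x z, d.1 e +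
          ∑ e ∈ tightCouplings MY.E EZ y z \ tightCouplings MX.E EZ x z, d.2 e = 0) ∧
      d ≠ 0 := by
  set A := tightCouplings MX.E EZ x z
  set B := tightCouplings MY.E EZ y z
  by_cases hF : EZ \ (A ∪ B) = ∅
  · have hL : ∑ e ∈ A, x e + ∑ e ∈ B \ A, y e = (L : ℤ) := by
      rw [Int.cast_natCast, ← hZ, Finset.sum_eq_sum_add_sum_sdiff_add_sum_sdiff_union
        (tightCouplings_subset_right : A ⊆ EZ) (tightCouplings_subset_right : B ⊆ EZ) z, hF,
        Finset.sum_empty, add_zero]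
      congr 1
      · exact Finset.sum_congr rfl fun e he => (mem_tightCouplings.1 he).2.symm
      · exact Finset.sum_congr rfl fun e he =>
          (mem_tightCouplings.1 (Finset.mem_sdiff.1 he).1).2.symm
    obtain ⟨d, hd, hσ, hd0⟩ := exists_isCoupledDirection_sum_eq_zero hx hy hne
      tightCouplings_subset_left tightCouplings_subset_left hL
    exact ⟨d, hd, fun _ => hσ, hd0⟩
  · obtain ⟨d, hd, hd0⟩ := exists_isCoupledDirection hx hy
      (Finset.inter_subset_left.trans tightCouplings_subset_left)
      (Finset.inter_subset_right.trans tightCouplings_subset_left) hne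
    exact ⟨d, hd, fun h => absurd h hF, hd0⟩

end TightCouplings

end LP_RRMB

end

theorem vertex_of_LP_RRMB_has_integral_coordinate_general {α : Type*} [DecidableEq α]
    (MX MY : FinMatroid α) (EZ : Finset α) (L : ℕ)
    (hEXne : MX.E.Nonempty)
    (x z y : α → ℝ)
    (hvert : (x, z, y) ∈ Set.extremePoints ℝ (LP_RRMB MX MY EZ L))
    (hx : ∀ e ∈ MX.E, 0 < x e) (hy : ∀ e ∈ MY.E, 0 < y e) (hz : ∀ e ∈ EZ, 0 < z e) :
    (∃ e' ∈ MX.E, x e' = 1) ∨ (∃ e'' ∈ MY.E, y e'' = 1) := by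
  by_contra hcon
  push Not at hcon
  obtain ⟨-, -, -, -, -, -, hX, hXlt, -, hZ, -, hY, hYlt⟩ := hvert.1
  have hxB := FinMatroid.isFractionalBase_of hX hXlt hx hcon.1
  have hyB := FinMatroid.isFractionalBase_of hY hYlt hy hcon.2
  obtain ⟨d, hd, hσ, hd0⟩ := LP_RRMB.exists_isCoupledDirection_tightCouplings hxB hyB hEXne hZ
  exact hd0 (LP_RRMB.eq_zero_of_isCoupledDirection hvert hx hy hz
    LP_RRMB.tightCouplings_subset_right LP_RRMB.tightCouplings_subset_right
    (fun _ he h => LP_RRMB.mem_tightCouplings.2 ⟨he, h⟩)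
    (fun _ he h => LP_RRMB.mem_tightCouplings.2 ⟨he, h⟩) hd hσ)

/-- If `(x, z, y)` is a vertex solution of
`LP_RRMB(E_X, I_X, E_Y, I_Y, E_Z, L)` with all coordinates on `E_X`, `E_Y`, `E_Z`
strictly positive (and `E_X`, `E_Y`, `E_Z` nonempty), then some `x_{e'} = 1` for an
element `e' ∈ E_X` or some `y_{e''} = 1` for an element `e'' ∈ E_Y`. -/
theorem vertex_of_LP_RRMB_has_integral_coordinate {α : Type*} [DecidableEq α]
    (MX MY : FinMatroid α) (EZ : Finset α) (L : ℕ)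
    (hEXne : MX.E.Nonempty) (hEYne : MY.E.Nonempty) (hEZne : EZ.Nonempty)
    (hEZ : EZ ⊆ MX.E ∪ MY.E) (hL : L ≤ EZ.card)
    (x z y : α → ℝ)
    (hvert : (x, z, y) ∈ Set.extremePoints ℝ (LP_RRMB MX MY EZ L))
    (hx : ∀ e ∈ MX.E, 0 < x e) (hy : ∀ e ∈ MY.E, 0 < y e) (hz : ∀ e ∈ EZ, 0 < z e) :
    (∃ e' ∈ MX.E, x e' = 1) ∨ (∃ e'' ∈ MY.E, y e'' = 1) :=
  vertex_of_LP_RRMB_has_integral_coordinate_general MX MY EZ L hEXne x z y hvert hx hy hz
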